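/- Let f₁,…,f_M : ℝ^d → ℝ be twice differentiable and L-smooth, let p be a probability distribution on {1,…,M}, let f(w) = E_{i∼p} f_i(w), assume the gradient variance bound E_{i∼p} ‖∇f_i(w) - ∇f(w)‖² ≤ σ² for all w, and let F(w) = E_{i∼p} f_i(w - α∇f_i(w)). Then for any w with ‖∇f(w)‖ ≤ G, one has ‖∇F(w)‖ ≤ (1 + 2αL + α²L²) G + (2αL + α²L²) σ. -/

import Mathlib

/-!
Write `T_i w = w - α ∇f_i(w)`, so that `∇F(w) = ∑ p_i (I - α ∇²f_i(w)) ∇f_i(T_i w)`. For each task,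
`‖∇f_i(T_i w) - ∇f_i(w)‖ ≤ αL ‖∇f_i(w)‖` by smoothness, and the Hessian term adds at most
`αL (1 + αL) ‖∇f_i(w)‖`; hence the `i`-th summand is within `(2αL + α²L²) ‖∇f_i(w)‖` of `∇f_i(w)`.
Averaging, `‖∇F(w)‖ ≤ ‖∇f(w)‖ + (2αL + α²L²) E‖∇f_i(w)‖`, and by Cauchy–Schwarz
`E‖∇f_i(w)‖ ≤ ‖∇f(w)‖ + (E‖∇f_i(w) - ∇f(w)‖²)^{1/2} ≤ G + σ`.
-/

open InnerProductSpace Finset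
open scoped NNReal

section WeightedAverage

variable {ι : Type*} {s : Finset ι} {p : ι → ℝ}

theorem Finset.sum_mul_le_of_sum_mul_sq_le {a : ι → ℝ} {σ : ℝ} (hp : ∀ i ∈ s, 0 ≤ p i)
    (hp1 : ∑ i ∈ s, p i = 1) (hσ : 0 ≤ σ) (h : ∑ i ∈ s, p i * a i ^ 2 ≤ σ ^ 2) :
    ∑ i ∈ s, p i * a i ≤ σ := by
  have hCS : (∑ i ∈ s, p i * a i) ^ 2 ≤ (∑ i ∈ s, p i) * ∑ i ∈ s, p i * a i ^ 2 :=
    sum_sq_le_sum_mul_sum_of_sq_le_mul s hp (fun i hi => mul_nonneg (hp i hi) (sq_nonneg _))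
      (fun i _ => le_of_eq (by ring))
  rw [hp1, one_mul] at hCS
  exact (le_abs_self _).trans (abs_le_of_sq_le_sq (hCS.trans h) hσ)

variable {E : Type*} [SeminormedAddCommGroup E]

theorem Finset.sum_mul_norm_le_norm_add {v : ι → E} {σ : ℝ} (g : E) (hp : ∀ i ∈ s, 0 ≤ p i)
    (hp1 : ∑ i ∈ s, p i = 1) (hσ : 0 ≤ σ) (h : ∑ i ∈ s, p i * ‖v i - g‖ ^ 2 ≤ σ ^ 2) :
    ∑ i ∈ s, p i * ‖v i‖ ≤ ‖g‖ + σ :=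
  calc ∑ i ∈ s, p i * ‖v i‖ ≤ ∑ i ∈ s, p i * (‖g‖ + ‖v i - g‖) := by
        gcongr with i hi
        · exact hp i hi
        · exact norm_le_norm_add_norm_sub' _ _
    _ = ‖g‖ + ∑ i ∈ s, p i * ‖v i - g‖ := by
        simp only [mul_add, sum_add_distrib, ← sum_mul, hp1, one_mul]
    _ ≤ ‖g‖ + σ := by gcongr; exact sum_mul_le_of_sum_mul_sq_le hp hp1 hσ h

variable [NormedSpace ℝ E]

theorem Finset.norm_sum_smul_le {v : ι → E} {a : ι → ℝ} (hp : ∀ i ∈ s, 0 ≤ p i)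
    (hv : ∀ i ∈ s, ‖v i‖ ≤ a i) : ‖∑ i ∈ s, p i • v i‖ ≤ ∑ i ∈ s, p i * a i :=
  (norm_sum_le _ _).trans <| sum_le_sum fun i hi => by
    rw [norm_smul, Real.norm_of_nonneg (hp i hi)]
    exact mul_le_mul_of_nonneg_left (hv i hi) (hp i hi)

end WeightedAverage

section Gradient

variable {E : Type*} [NormedAddCommGroup E] [InnerProductSpace ℝ E] [CompleteSpace E]

theorem norm_gradient (f : E → ℝ) (x : E) : ‖gradient f x‖ = ‖fderiv ℝ f x‖ := by
  rw [gradient, LinearIsometryEquiv.norm_map]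

theorem norm_gradient_sub_gradient (f g : E → ℝ) (x y : E) :
    ‖gradient f x - gradient g y‖ = ‖fderiv ℝ f x - fderiv ℝ g y‖ := by
  rw [gradient, gradient, ← LinearIsometryEquiv.map_sub, LinearIsometryEquiv.norm_map]

theorem ContDiff.differentiable_gradient {f : E → ℝ} (hf : ContDiff ℝ 2 f) :
    Differentiable ℝ (gradient f) :=
  (toDual ℝ E).symm.toContinuousLinearEquiv.differentiable.comp
    ((hf.fderiv_right (m := 1) (by norm_num)).differentiable one_ne_zero)

theorem gradient_sum_mul {ι : Type*} (s : Finset ι) (p : ι → ℝ) {g : ι → E → ℝ} {x : E}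
    (hg : ∀ i ∈ s, DifferentiableAt ℝ (g i) x) :
    gradient (fun y => ∑ i ∈ s, p i * g i y) x = ∑ i ∈ s, p i • gradient (g i) x := by
  rw [gradient, (HasFDerivAt.fun_sum fun i hi => (hg i hi).hasFDerivAt.const_mul (p i)).fderiv]
  simp [gradient, map_sum]

variable {f : E → ℝ} {K : ℝ≥0} {α : ℝ} {w : E}

theorem norm_fderiv_sub_fderiv_le (hK : LipschitzWith K (gradient f)) (x y : E) :
    ‖fderiv ℝ f x - fderiv ℝ f y‖ ≤ K * ‖x - y‖ := by
  rw [← norm_gradient_sub_gradient, ← dist_eq_norm, ← dist_eq_norm]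
  exact hK.dist_le_mul x y

theorem hasFDerivAt_sub_smul_gradient (hgd : DifferentiableAt ℝ (gradient f) w) :
    HasFDerivAt (fun x => x - α • gradient f x)
      (ContinuousLinearMap.id ℝ E - α • fderiv ℝ (gradient f) w) w :=
  (hasFDerivAt_id w).sub (hgd.hasFDerivAt.const_smul α)

theorem norm_gradient_comp_sub_smul_gradient_sub_le (hα : 0 ≤ α)
    (hf : DifferentiableAt ℝ f (w - α • gradient f w))
    (hgd : DifferentiableAt ℝ (gradient f) w) (hK : LipschitzWith K (gradient f)) :
    ‖gradient (fun x => f (x - α • gradient f x)) w - gradient f w‖ ≤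
      (2 * α * K + α ^ 2 * K ^ 2) * ‖gradient f w‖ := by
  rw [norm_gradient_sub_gradient, norm_gradient]
  set D := fderiv ℝ f (w - α • gradient f w)
  set D₀ := fderiv ℝ f w
  set H := fderiv ℝ (gradient f) w
  have hderiv : fderiv ℝ (fun x => f (x - α • gradient f x)) w = D - α • D.comp H := by
    have hT : HasFDerivAt (fun x => f (x - α • gradient f x)) (D.comp (.id ℝ E - α • H)) w :=
      hf.hasFDerivAt.comp w (hasFDerivAt_sub_smul_gradient hgd)
    rw [hT.fderiv, ContinuousLinearMap.comp_sub, ContinuousLinearMap.comp_id,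
      ContinuousLinearMap.comp_smul]
  have hD : ‖D - D₀‖ ≤ α * K * ‖D₀‖ :=
    calc ‖D - D₀‖ ≤ K * ‖(w - α • gradient f w) - w‖ := norm_fderiv_sub_fderiv_le hK _ _
      _ = α * K * ‖D₀‖ := by
        rw [sub_sub_cancel_left, norm_neg, norm_smul, Real.norm_of_nonneg hα, norm_gradient]
        ring
  have hDH : ‖α • D.comp H‖ ≤ α * ((1 + α * K) * ‖D₀‖ * K) := by
    rw [norm_smul, Real.norm_of_nonneg hα]
    gcongr
    calc ‖D.comp H‖ ≤ ‖D‖ * ‖H‖ := D.opNorm_comp_le H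
      _ ≤ (‖D₀‖ + ‖D - D₀‖) * K := by
        gcongr
        · exact norm_le_norm_add_norm_sub' _ _
        · exact norm_fderiv_le_of_lipschitz ℝ hK
      _ ≤ (‖D₀‖ + α * K * ‖D₀‖) * K := by gcongr
      _ = (1 + α * K) * ‖D₀‖ * K := by ring
  rw [hderiv, sub_right_comm]
  calc ‖D - D₀ - α • D.comp H‖ ≤ ‖D - D₀‖ + ‖α • D.comp H‖ := norm_sub_le _ _
    _ ≤ α * K * ‖D₀‖ + α * ((1 + α * K) * ‖D₀‖ * K) := add_le_add hD hDH
    _ = (2 * α * K + α ^ 2 * K ^ 2) * ‖D₀‖ := by ring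

end Gradient

/-- for `M` twice differentiable `L`-smooth task losses with gradient variance
bounded by `σ²`, at any `w` with `‖∇f(w)‖ ≤ G` the MAML loss gradient satisfies
`‖∇F(w)‖ ≤ (1 + 2αL + α²L²) G + (2αL + α²L²) σ`. -/
theorem stmt_3 {d M : ℕ} (f : Fin M → EuclideanSpace ℝ (Fin d) → ℝ) (p : Fin M → ℝ)
    (hp : ∀ i, 0 ≤ p i) (hp1 : ∑ i, p i = 1)
    (L σ α G : ℝ) (hL : 0 < L) (hσ : 0 ≤ σ) (hα : 0 < α)
    (hf : ∀ i, ContDiff ℝ 2 (f i))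
    (hsmooth : ∀ i, ∀ w u : EuclideanSpace ℝ (Fin d),
      ‖gradient (f i) w - gradient (f i) u‖ ≤ L * ‖w - u‖)
    (favg : EuclideanSpace ℝ (Fin d) → ℝ) (hfavg : favg = fun w => ∑ i, p i * f i w)
    (hvar : ∀ w : EuclideanSpace ℝ (Fin d),
      ∑ i, p i * ‖gradient (f i) w - gradient favg w‖ ^ 2 ≤ σ ^ 2)
    (F : EuclideanSpace ℝ (Fin d) → ℝ)
    (hF : F = fun w => ∑ i, p i * f i (w - α • gradient (f i) w))
    (w : EuclideanSpace ℝ (Fin d)) (hG : ‖gradient favg w‖ ≤ G) :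
    ‖gradient F w‖ ≤ (1 + 2 * α * L + α ^ 2 * L ^ 2) * G + (2 * α * L + α ^ 2 * L ^ 2) * σ := by
  have hdiff i : Differentiable ℝ (f i) := (hf i).differentiable (by norm_num)
  have hgd i : Differentiable ℝ (gradient (f i)) := (hf i).differentiable_gradient
  have hlip i : LipschitzWith ⟨L, hL.le⟩ (gradient (f i)) :=
    LipschitzWith.of_dist_le_mul fun x y => by
      rw [dist_eq_norm, dist_eq_norm]
      exact hsmooth i x y
  set c := 2 * α * L + α ^ 2 * L ^ 2
  have hstep i : ‖gradient (fun x => f i (x - α • gradient (f i) x)) w - gradient (f i) w‖ ≤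
      c * ‖gradient (f i) w‖ :=
    norm_gradient_comp_sub_smul_gradient_sub_le hα.le (hdiff i _) (hgd i w) (hlip i)
  have hsplit : gradient F w = gradient favg w +
      ∑ i, p i • (gradient (fun x => f i (x - α • gradient (f i) x)) w - gradient (f i) w) := by
    have hstepdiff i : DifferentiableAt ℝ (fun x => f i (x - α • gradient (f i) x)) w :=
      (hdiff i _).comp w (hasFDerivAt_sub_smul_gradient (hgd i w)).differentiableAt
    rw [hF, hfavg, gradient_sum_mul _ _ fun i _ => hstepdiff i,
      gradient_sum_mul _ _ fun i _ => (hdiff i).differentiableAt]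
    simp only [smul_sub, sum_sub_distrib, add_sub_cancel]
  have hmean : ∑ i, p i * ‖gradient (f i) w‖ ≤ G + σ :=
    (sum_mul_norm_le_norm_add _ (fun i _ => hp i) hp1 hσ (hvar w)).trans (by linarith)
  calc ‖gradient F w‖ ≤ ‖gradient favg w‖ + ∑ i, p i * (c * ‖gradient (f i) w‖) := by
        rw [hsplit]
        grw [norm_add_le, norm_sum_smul_le (fun i _ => hp i) fun i _ => hstep i]
    _ = ‖gradient favg w‖ + c * ∑ i, p i * ‖gradient (f i) w‖ := by
        simp only [mul_sum, mul_left_comm]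
    _ ≤ G + c * (G + σ) := by gcongr
    _ = (1 + 2 * α * L + α ^ 2 * L ^ 2) * G + (2 * α * L + α ^ 2 * L ^ 2) * σ := by ring
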